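/- arXiv:1411.2057 — 5 statements merged into one kernel-verified Lean document; each statement's English description precedes it below -/
import Mathlib

section
/- In a uniformly random permutation of R red and B blue balls arranged in a line, let N_cons(i) be the number of red balls in the maximal run of consecutive red balls containing the i-th red ball. Then for every i, the expectation of N_cons(i) is at most 4R/(B+1) + 2. -/
/-- All arrangements of `R` red and `B` blue balls in a line: colorings of
`Fin (R+B)` with exactly `R` red (`true`) positions. -/
def arrangements (R B : ℕ) : Finset (Fin (R + B) → Bool) :=
  Finset.univ.filter fun c => (Finset.univ.filter fun j => c j = true).card = R

/-- The color at natural-number position `k` (false off the line). -/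
def colAt (R B : ℕ) (c : Fin (R + B) → Bool) (k : ℕ) : Bool :=
  if h : k < R + B then c ⟨k, h⟩ else false

/-- Position (in `0,…,R+B-1`) of the `i`-th red ball (0-indexed). -/
def redPos (R B : ℕ) (c : Fin (R + B) → Bool) (i : ℕ) : ℕ :=
  ((((Finset.univ.filter fun j => c j = true).sort (· ≤ ·)).map Fin.val).getD i 0)

/-- Number of balls in the maximal run of consecutive red balls containing
position `p` (all positions `j` such that every position between `p` and `j`
is red). -/
def runCard (R B : ℕ) (c : Fin (R + B) → Bool) (p : ℕ) : ℕ :=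
  ((Finset.range (R + B)).filter fun j =>
    ∀ k ∈ Finset.Icc (min p j) (max p j), colAt R B c k = true).card

/-!
Let `p` be the position of red ball `i`. Its run consists of `p`, the `j > p` with `[p, j]` red,
and the `j < p` with `[j, p]` red; in the last case `j` is the position of red ball
`i - (p - j)`. So every member of the run other than `p` is witnessed by a red block
`[redPos i', redPos i' + t]` with `t ≥ 1`, where `i' = i` or `i' = i - t`. Deleting the `t` balls
after `redPos i'` is injective on the arrangements with such a block and lands in the
arrangements of `R - t` red and `B` blue balls, so at most `C(R + B - t, B)` arrangements have
it. Summing over `t` with the hockey-stick identity bounds the total run size by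
`C(R + B, B) + 2 C(R + B, B + 1)`, and `C(R + B, B + 1) = C(R + B, B) R / (B + 1)`, so the
expectation is at most `1 + 2R / (B + 1)`.
-/

namespace RedRuns

open Finset

section Colorings

variable {g h : ℕ → Bool} {a b n p t : ℕ}

lemma count_add_of_forall (hg : ∀ k < b, g (a + k) = true) :
    Nat.count (g · = true) (a + b) = Nat.count (g · = true) a + b := by
  rw [Nat.count_add, Nat.count_iff_forall.2 hg]

lemma count_congr (hgh : ∀ k < n, g k = h k) :
    Nat.count (g · = true) n = Nat.count (h · = true) n :=
  le_antisymm (Nat.count_mono_left fun k hk hgk => by rwa [← hgh k hk])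
    (Nat.count_mono_left fun k hk hhk => by rwa [hgh k hk])

def deleteAfter (g : ℕ → Bool) (p t k : ℕ) : Bool :=
  if k ≤ p then g k else g (k + t)

lemma count_deleteAfter_of_le (hk : n ≤ p + 1) :
    Nat.count (deleteAfter g p t · = true) n = Nat.count (g · = true) n :=
  count_congr fun k hk' => if_pos (by omega)

lemma count_deleteAfter (hg : ∀ k ∈ Icc p (p + t), g k = true) (m : ℕ) :
    Nat.count (deleteAfter g p t · = true) (p + 1 + m) + t =
      Nat.count (g · = true) (p + 1 + t + m) := by
  have block : Nat.count (g · = true) (p + 1 + t) = Nat.count (g · = true) (p + 1) + t :=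
    count_add_of_forall fun k hk => hg _ (mem_Icc.2 ⟨by omega, by omega⟩)
  have above : ∀ k, deleteAfter g p t (p + 1 + k) = g (p + 1 + t + k) := fun k => by
    rw [deleteAfter, if_neg (by omega)]
    congr 1
    omega
  rw [Nat.count_add, Nat.count_add _ (p + 1 + t), count_deleteAfter_of_le le_rfl, block]
  simp only [above]
  omega

lemma eq_of_deleteAfter_eq {g₁ g₂ : ℕ → Bool} {p₁ p₂ : ℕ}
    (hg₁ : ∀ k ∈ Icc p₁ (p₁ + t), g₁ k = true) (hg₂ : ∀ k ∈ Icc p₂ (p₂ + t), g₂ k = true)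
    (hcount : Nat.count (g₁ · = true) p₁ = Nat.count (g₂ · = true) p₂)
    (h : deleteAfter g₁ p₁ t = deleteAfter g₂ p₂ t) : g₁ = g₂ := by
  -- `p` is the position of red ball number `count g p` in the shortened coloring as well
  have recover : ∀ {g : ℕ → Bool} {p : ℕ}, (∀ k ∈ Icc p (p + t), g k = true) →
      Nat.nth (deleteAfter g p t · = true) (Nat.count (g · = true) p) = p := fun hg => by
    rw [← count_deleteAfter_of_le (Nat.le_succ _)]
    refine Nat.nth_count ?_
    rw [deleteAfter, if_pos le_rfl]
    exact hg _ (mem_Icc.2 ⟨le_rfl, by omega⟩)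
  obtain rfl : p₁ = p₂ := by rw [← recover hg₁, ← recover hg₂, h, hcount]
  funext k
  by_cases hk : k ≤ p₁
  · simpa [deleteAfter, hk] using congrFun h k
  by_cases hk' : k ≤ p₁ + t
  · rw [hg₁ k (mem_Icc.2 ⟨by omega, hk'⟩), hg₂ k (mem_Icc.2 ⟨by omega, hk'⟩)]
  · have := congrFun h (k - t)
    simpa [deleteAfter, show ¬ k - t ≤ p₁ by omega, Nat.sub_add_cancel (show t ≤ k by omega)]
      using this

lemma sum_range_choose_eq_choose_succ (n k : ℕ) :
    ∑ m ∈ range n, m.choose k = n.choose (k + 1) := by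
  induction n with
  | zero => simp
  | succ n ih => rw [sum_range_succ, ih, Nat.choose_succ_succ' n k, add_comm]

lemma sum_range_choose_sub (n k : ℕ) :
    ∑ t ∈ range n, (n - 1 - t).choose k = n.choose (k + 1) := by
  rw [sum_range_reflect (fun m => m.choose k), sum_range_choose_eq_choose_succ]

end Colorings

section Line

variable {R B i t : ℕ} {c : Fin (R + B) → Bool}

lemma colAt_val (c : Fin (R + B) → Bool) (j : Fin (R + B)) : colAt R B c j = c j :=
  dif_pos j.isLt

lemma colAt_of_le (c : Fin (R + B) → Bool) {k : ℕ} (hk : R + B ≤ k) : colAt R B c k = false :=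
  dif_neg (by omega)

lemma lt_of_colAt {k : ℕ} (h : colAt R B c k = true) : k < R + B := by
  by_contra hk
  rw [colAt_of_le c (by omega)] at h
  exact Bool.false_ne_true h

lemma colAt_injective : Function.Injective (colAt R B) := fun c₁ c₂ h =>
  funext fun j => by rw [← colAt_val c₁ j, h, colAt_val]

lemma colAt_restrict {f : ℕ → Bool} (hf : ∀ k, R + B ≤ k → f k = false) :
    colAt R B (fun j => f j) = f := by
  funext k
  unfold colAt
  split_ifs with hk
  · rfl
  · exact (hf k (by omega)).symm

lemma mem_arrangements_iff :
    c ∈ arrangements R B ↔ Nat.count (colAt R B c · = true) (R + B) = R := by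
  rw [arrangements, mem_filter, Nat.count_eq_card_filter_range, ← card_map Fin.valEmbedding]
  simp only [mem_univ, true_and]
  congr!
  ext k
  simp only [mem_map, mem_filter, mem_univ, true_and, Fin.valEmbedding_apply, mem_range]
  constructor
  · rintro ⟨j, hj, rfl⟩
    exact ⟨j.isLt, by rwa [colAt_val c j]⟩
  · rintro ⟨hk, hred⟩
    exact ⟨⟨k, hk⟩, by rwa [← colAt_val c ⟨k, hk⟩], rfl⟩

lemma card_arrangements (R B : ℕ) : #(arrangements R B) = (R + B).choose B := by
  have hpowerset : #(powersetCard R (univ : Finset (Fin (R + B)))) = (R + B).choose R := by simp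
  rw [← Nat.choose_symm_add, ← hpowerset]
  refine card_nbij' (fun c => ({j | c j = true} : Finset _)) (fun s j => decide (j ∈ s))
    ?_ ?_ ?_ ?_
  · intro c hc
    simpa [arrangements] using hc
  · intro s hs
    simpa [arrangements] using hs
  · intro c _
    simp
  · intro s _
    simp

lemma count_colAt_le (hc : c ∈ arrangements R B) (n : ℕ) :
    Nat.count (colAt R B c · = true) n ≤ R := by
  calc Nat.count (colAt R B c · = true) n
      ≤ Nat.count (colAt R B c · = true) (R + B + n) := Nat.count_monotone _ (by omega)
    _ = R := by
      rw [Nat.count_add, mem_arrangements_iff.1 hc,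
        Nat.count_iff_forall_not.2 fun k _ => by simp [colAt_of_le c (Nat.le_add_right _ k)],
        add_zero]

lemma redPos_eq_nth (c : Fin (R + B) → Bool) (i : ℕ) :
    redPos R B c i = Nat.nth (colAt R B c · = true) i := by
  have hfin : (Set.ofPred (colAt R B c · = true)).Finite :=
    (Set.finite_Iio (R + B)).subset fun k hk => lt_of_colAt hk
  rw [Nat.nth_eq_getD_sort hfin, redPos]
  erw [Finset.map_sort Fin.valEmbedding _ (· ≤ ·) (· ≤ ·) fun _ _ _ _ => Iff.rfl]
  congr 2
  ext k
  simp only [mem_map, mem_filter, mem_univ, true_and, Fin.valEmbedding_apply,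
    Set.Finite.mem_toFinset]
  constructor
  · rintro ⟨j, hj, rfl⟩
    exact (colAt_val c j).trans hj
  · intro hk
    exact ⟨⟨k, lt_of_colAt hk⟩, (colAt_val c _).symm.trans hk, rfl⟩

lemma count_redPos (hc : c ∈ arrangements R B) (hi : i < R) :
    Nat.count (colAt R B c · = true) (redPos R B c i) = i := by
  rw [redPos_eq_nth]
  exact Nat.count_nth fun hfin =>
    hi.trans_le ((mem_arrangements_iff.1 hc).symm.le.trans (Nat.count_le_card hfin _))

lemma redPos_count {k : ℕ} (hk : colAt R B c k = true) :
    redPos R B c (Nat.count (colAt R B c · = true) k) = k := by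
  rw [redPos_eq_nth, Nat.nth_count hk]

def RedBlock (R B : ℕ) (c : Fin (R + B) → Bool) (i t : ℕ) : Prop :=
  ∀ k ∈ Icc (redPos R B c i) (redPos R B c i + t), colAt R B c k = true

instance (i t : ℕ) : DecidablePred (RedBlock R B · i t) := fun c => by
  unfold RedBlock; infer_instance

lemma RedBlock.add_lt (hc : c ∈ arrangements R B) (hi : i < R) (hb : RedBlock R B c i t) :
    i + t < R := by
  have := count_add_of_forall (a := redPos R B c i) (b := t + 1)
    fun k hk => hb _ (mem_Icc.2 ⟨by omega, by omega⟩)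
  have := count_colAt_le hc (redPos R B c i + (t + 1))
  rw [count_redPos hc hi] at *
  omega

lemma RedBlock.redPos_add_lt (hb : RedBlock R B c i t) : redPos R B c i + t < R + B :=
  lt_of_colAt (hb _ (mem_Icc.2 ⟨by omega, le_rfl⟩))

lemma colAt_deleteAfter (hb : RedBlock R B c i t) (ht : t ≤ R) :
    colAt (R - t) B (fun j => deleteAfter (colAt R B c) (redPos R B c i) t j) =
      deleteAfter (colAt R B c) (redPos R B c i) t := by
  have := hb.redPos_add_lt
  refine colAt_restrict fun k hk => ?_
  rw [deleteAfter, if_neg (by omega), colAt_of_le c (by omega)]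

lemma deleteAfter_mem_arrangements (hc : c ∈ arrangements R B) (hi : i < R)
    (hb : RedBlock R B c i t) :
    (fun j : Fin (R - t + B) => deleteAfter (colAt R B c) (redPos R B c i) t j) ∈
      arrangements (R - t) B := by
  have hiR := hb.add_lt hc hi
  have hpos := hb.redPos_add_lt
  rw [mem_arrangements_iff, colAt_deleteAfter hb (by omega)]
  obtain ⟨m, hm⟩ : ∃ m, R - t + B = redPos R B c i + 1 + m :=
    ⟨R - t + B - (redPos R B c i + 1), by omega⟩
  have := count_deleteAfter hb m
  rw [show redPos R B c i + 1 + t + m = R + B by omega, mem_arrangements_iff.1 hc] at this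
  rw [hm]
  omega

lemma card_filter_redBlock_le (hi : i < R) (t : ℕ) :
    #{c ∈ arrangements R B | RedBlock R B c i t} ≤ (R + B - t).choose B := by
  by_cases ht : t ≤ R
  swap
  · rw [card_eq_zero.2 (filter_eq_empty_iff.2 fun c hc hb => by
      have := hb.add_lt hc hi; omega)]
    exact Nat.zero_le _
  calc #{c ∈ arrangements R B | RedBlock R B c i t}
      ≤ #(arrangements (R - t) B) := by
        refine card_le_card_of_injOn
          (fun c j => deleteAfter (colAt R B c) (redPos R B c i) t j) ?_ ?_
        · intro c hc
          rw [coe_filter] at hc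
          exact deleteAfter_mem_arrangements hc.1 hi hc.2
        · intro c₁ hc₁ c₂ hc₂ h
          rw [coe_filter] at hc₁ hc₂
          have h' := congrArg (colAt (R - t) B) h
          simp only [colAt_deleteAfter hc₁.2 ht, colAt_deleteAfter hc₂.2 ht] at h'
          exact colAt_injective (eq_of_deleteAfter_eq hc₁.2 hc₂.2
            (by rw [count_redPos hc₁.1 hi, count_redPos hc₂.1 hi]) h')
    _ = (R + B - t).choose B := by rw [card_arrangements]; congr 1; omega

lemma runCard_redPos_le (hc : c ∈ arrangements R B) (hi : i < R) :
    runCard R B c (redPos R B c i) ≤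
      #{t ∈ range (R + B) | RedBlock R B c i t} +
        #{s ∈ range i | RedBlock R B c (i - 1 - s) (s + 1)} := by
  set p := redPos R B c i
  set run := {j ∈ range (R + B) | ∀ k ∈ Icc (min p j) (max p j), colAt R B c k = true}
  have right : #{j ∈ run | p ≤ j} ≤ #{t ∈ range (R + B) | RedBlock R B c i t} := by
    refine card_le_card_of_injOn (· - p) (fun j hj => ?_) (fun j₁ hj₁ j₂ hj₂ h => ?_)
    · simp only [run, coe_filter, mem_filter, mem_range, Set.mem_ofPred_eq] at hj ⊢
      obtain ⟨⟨hj, hred⟩, hpj⟩ := hj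
      rw [min_eq_left hpj, max_eq_right hpj] at hred
      exact ⟨by omega, fun k hk => hred k (by rw [mem_Icc] at hk ⊢; omega)⟩
    · simp only [run, coe_filter, mem_filter, Set.mem_ofPred_eq] at hj₁ hj₂
      simp only at h
      omega
  have left : #{j ∈ run | ¬p ≤ j} ≤ #{s ∈ range i | RedBlock R B c (i - 1 - s) (s + 1)} := by
    refine card_le_card_of_injOn (p - 1 - ·) (fun j hj => ?_) (fun j₁ hj₁ j₂ hj₂ h => ?_)
    · simp only [run, coe_filter, mem_filter, mem_range, Set.mem_ofPred_eq] at hj ⊢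
      obtain ⟨⟨hj, hred⟩, hpj⟩ := hj
      rw [min_eq_right (by omega), max_eq_left (by omega)] at hred
      have hcount := count_add_of_forall (g := colAt R B c) (a := j) (b := p - j)
        fun k hk => hred _ (mem_Icc.2 ⟨by omega, by omega⟩)
      rw [show j + (p - j) = p by omega, count_redPos hc hi] at hcount
      have hj_pos : redPos R B c (i - 1 - (p - 1 - j)) = j := by
        rw [show i - 1 - (p - 1 - j) = Nat.count (colAt R B c · = true) j by omega]
        exact redPos_count (hred j (mem_Icc.2 ⟨le_rfl, by omega⟩))
      refine ⟨by omega, fun k hk => hred k ?_⟩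
      rw [hj_pos, mem_Icc] at hk
      exact mem_Icc.2 ⟨hk.1, by omega⟩
    · simp only [run, coe_filter, mem_filter, Set.mem_ofPred_eq] at hj₁ hj₂
      simp only at h
      omega
  calc runCard R B c p = #{j ∈ run | p ≤ j} + #{j ∈ run | ¬p ≤ j} :=
        (card_filter_add_card_filter_not _).symm
    _ ≤ _ := add_le_add right left

lemma sum_runCard_redPos_le (hi : i < R) :
    ∑ c ∈ arrangements R B, runCard R B c (redPos R B c i) ≤
      (R + B).choose B + 2 * (R + B).choose (B + 1) := by
  calc ∑ c ∈ arrangements R B, runCard R B c (redPos R B c i)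
      ≤ ∑ c ∈ arrangements R B, (#{t ∈ range (R + B) | RedBlock R B c i t} +
          #{s ∈ range i | RedBlock R B c (i - 1 - s) (s + 1)}) :=
        sum_le_sum fun c hc => runCard_redPos_le hc hi
    _ = ∑ t ∈ range (R + B), #{c ∈ arrangements R B | RedBlock R B c i t} +
          ∑ s ∈ range i, #{c ∈ arrangements R B | RedBlock R B c (i - 1 - s) (s + 1)} := by
        rw [sum_add_distrib]
        exact congrArg₂ (· + ·) (sum_card_bipartiteAbove_eq_sum_card_bipartiteBelow _)
          (sum_card_bipartiteAbove_eq_sum_card_bipartiteBelow _)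
    _ ≤ ∑ t ∈ range (R + B + 1), (R + B + 1 - 1 - t).choose B +
          ∑ s ∈ range (R + B), (R + B - 1 - s).choose B := by
        gcongr ?_ + ?_
        · refine (sum_le_sum fun t _ => card_filter_redBlock_le hi t).trans ?_
          simp only [Nat.add_sub_cancel]
          exact sum_le_sum_of_subset (range_subset_range.2 (Nat.le_succ _))
        · refine (sum_le_sum fun s _ => ?_).trans
            (sum_le_sum_of_subset (range_subset_range.2 (by omega)))
          exact (card_filter_redBlock_le (by omega) (s + 1)).trans_eq (by congr 1; omega)
    _ = (R + B).choose B + 2 * (R + B).choose (B + 1) := by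
        rw [sum_range_choose_sub, sum_range_choose_sub, Nat.choose_succ_succ']
        ring

end Line

end RedRuns

theorem stmt_0_general (R B : ℕ) (i : ℕ) (hi : i < R) :
    (∑ c ∈ arrangements R B, (runCard R B c (redPos R B c i) : ℝ)) /
      ((arrangements R B).card : ℝ) ≤ 4 * R / (B + 1) + 2 := by
  have key : (∑ c ∈ arrangements R B, runCard R B c (redPos R B c i)) * (B + 1) ≤
      (4 * R + 2 * (B + 1)) * (arrangements R B).card := by
    have hchoose := Nat.choose_succ_right_eq (R + B) B
    rw [Nat.add_sub_cancel] at hchoose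
    rw [RedRuns.card_arrangements]
    nlinarith [RedRuns.sum_runCard_redPos_le (B := B) hi]
  have hpos : (0 : ℝ) < (arrangements R B).card := by
    rw [RedRuns.card_arrangements]
    exact_mod_cast Nat.choose_pos (by omega)
  rw [div_le_iff₀ hpos, div_add' _ _ _ (by positivity), div_mul_eq_mul_div,
    le_div_iff₀ (by positivity)]
  exact_mod_cast key

/-- In a uniformly random permutation of `R` red and `B` blue balls,
the expected size of the run of consecutive red balls containing the `i`-th
red ball is at most `4R/(B+1) + 2`. -/
theorem stmt_0 (R B : ℕ) (hR : 0 < R) (i : ℕ) (hi : i < R) :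
    (∑ c ∈ arrangements R B, (runCard R B c (redPos R B c i) : ℝ)) /
      ((arrangements R B).card : ℝ) ≤ 4 * R / (B + 1) + 2 :=
  stmt_0_general R B i hi
end

section
/- If 0 ≤ N ≤ 2(R+1) and M ≤ N + (1 - N^2)/(4(R+1)), and N satisfies N ≤ 4(R+1)/B + 1 for some B > 3, then M ≤ 4(R+1)/(B+1) + 1. -/
/-!
Write `a = 4(R+1)`. The map `k ↦ k + (1 - k²)/a` is increasing up to its vertex `a/2`. If
`a/B + 1 ≤ a/2` we may substitute `N ≤ a/B + 1`, and the value there falls short of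
`a/(B+1) + 1` by `(a + 2B(B+1)) / (B²(B+1))`. Otherwise the vertex value `a/4 + 1/a` is
already below the bound, because `a/2 < a/B + 1` forces `B` to be small.
-/

open Set

/-- The right-hand side of the recursion `M ≤ N + (1 - N²)/(4(R+1))`, with `a = 4(R+1)`. -/
noncomputable def runStep (a k : ℝ) : ℝ := k + (1 - k ^ 2) / a

theorem monotoneOn_runStep {a : ℝ} (ha : 0 < a) : MonotoneOn (runStep a) (Iic (a / 2)) := by
  intro x hx y hy hxy
  rw [mem_Iic] at hx hy
  have gap : runStep a y - runStep a x = (y - x) * (a - (x + y)) / a := by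
    unfold runStep; field_simp; ring
  have : 0 ≤ (y - x) * (a - (x + y)) / a :=
    div_nonneg (mul_nonneg (by linarith) (by linarith)) ha.le
  linarith

theorem runStep_div_add_one_le {a B : ℝ} (ha : 0 < a) (hB : 0 < B) :
    runStep a (a / B + 1) ≤ a / (B + 1) + 1 := by
  have gap : a / (B + 1) + 1 - runStep a (a / B + 1)
      = (a + 2 * B * (B + 1)) / (B ^ 2 * (B + 1)) := by
    unfold runStep; field_simp; ring
  have : 0 ≤ (a + 2 * B * (B + 1)) / (B ^ 2 * (B + 1)) := by positivity
  linarith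

theorem runStep_half_le {a B : ℝ} (ha : 2 ≤ a) (hB : 0 < B) (hlt : a / 2 < a / B + 1) :
    runStep a (a / 2) ≤ a / (B + 1) + 1 := by
  have hBa : B * (a - 2) < 2 * a := by
    have := (lt_div_iff₀ hB).1 (show a / 2 - 1 < a / B by linarith)
    linarith
  have key : (B + 1) * (a - 2) ^ 2 ≤ 4 * a ^ 2 :=
    calc (B + 1) * (a - 2) ^ 2 = (a - 2) * (B * (a - 2) + (a - 2)) := by ring
      _ ≤ (a - 2) * (3 * a - 2) := by gcongr; linarith
      _ ≤ 4 * a ^ 2 := by nlinarith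
  have gap : a / (B + 1) + 1 - runStep a (a / 2)
      = (4 * a ^ 2 - (B + 1) * (a - 2) ^ 2) / (4 * a * (B + 1)) := by
    unfold runStep; field_simp; ring
  have : 0 ≤ (4 * a ^ 2 - (B + 1) * (a - 2) ^ 2) / (4 * a * (B + 1)) :=
    div_nonneg (by linarith) (by positivity)
  linarith

theorem runStep_le {a B k : ℝ} (ha : 2 ≤ a) (hB : 0 < B) (hk : k ≤ a / 2)
    (hkB : k ≤ a / B + 1) : runStep a k ≤ a / (B + 1) + 1 := by
  have ha0 : 0 < a := by linarith
  by_cases hc : a / B + 1 ≤ a / 2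
  · calc runStep a k ≤ runStep a (a / B + 1) := monotoneOn_runStep ha0 hk hc hkB
      _ ≤ a / (B + 1) + 1 := runStep_div_add_one_le ha0 hB
  · calc runStep a k ≤ runStep a (a / 2) := monotoneOn_runStep ha0 hk (mem_Iic.2 le_rfl) hk
      _ ≤ a / (B + 1) + 1 := runStep_half_le ha hB (not_le.1 hc)

theorem stmt_2_general (R B N M : ℝ) (hR : 0 ≤ R) (hB : 3 < B)
    (hN2 : N ≤ 2 * (R + 1))
    (hM : M ≤ N + (1 - N ^ 2) / (4 * (R + 1)))
    (hNB : N ≤ 4 * (R + 1) / B + 1) :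
    M ≤ 4 * (R + 1) / (B + 1) + 1 :=
  hM.trans (runStep_le (by linarith) (by linarith) (by linarith) hNB)

/-- Inductive step for bounding expected run lengths: if `0 ≤ N ≤ 2(R+1)`,
`M ≤ N + (1 - N²)/(4(R+1))`, and `N ≤ 4(R+1)/B + 1` for some `B > 3`,
then `M ≤ 4(R+1)/(B+1) + 1`. -/
theorem stmt_2 (R B N M : ℝ) (hR : 0 ≤ R) (hB : 3 < B)
    (hN0 : 0 ≤ N) (hN2 : N ≤ 2 * (R + 1))
    (hM : M ≤ N + (1 - N ^ 2) / (4 * (R + 1)))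
    (hNB : N ≤ 4 * (R + 1) / B + 1) :
    M ≤ 4 * (R + 1) / (B + 1) + 1 :=
  stmt_2_general R B N M hR hB hN2 hM hNB
end

section
/- For every positive integer d, (1 - 1/d)^d ≥ 1/e - 1/(e·d). -/
/-! Since `(1 + 1/n)^n ≤ e`, the reciprocal `(1 - 1/(n+1))^n = (n/(n+1))^n` is at least `1/e`;
multiplying by one more factor `1 - 1/(n+1)` gives the claim for `d = n + 1`. -/

namespace Real

lemma exp_neg_one_le_one_sub_inv_pow (n : ℕ) : exp (-1) ≤ (1 - ((n + 1 : ℕ) : ℝ)⁻¹) ^ n := by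
  rcases Nat.eq_zero_or_pos n with rfl | hn
  · simp
  have hbase : 1 - ((n + 1 : ℕ) : ℝ)⁻¹ = (1 + (n : ℝ)⁻¹)⁻¹ := by
    have : (n : ℝ) ≠ 0 := by positivity
    push_cast
    field_simp
    ring
  rw [hbase, inv_pow, exp_neg]
  exact inv_anti₀ (by positivity) one_add_inv_pow_le_exp

lemma exp_neg_one_mul_le_one_sub_inv_pow (d : ℕ) :
    exp (-1) * (1 - (d : ℝ)⁻¹) ≤ (1 - (d : ℝ)⁻¹) ^ d := by
  rcases d with _ | n
  · simp
  have hbase : 0 ≤ 1 - ((n + 1 : ℕ) : ℝ)⁻¹ :=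
    sub_nonneg.mpr (inv_le_one_of_one_le₀ (by simp))
  rw [pow_succ]
  exact mul_le_mul_of_nonneg_right (exp_neg_one_le_one_sub_inv_pow n) hbase

end Real

theorem stmt_3_general (d : ℕ) :
    (1 - 1 / (d : ℝ)) ^ d ≥ 1 / Real.exp 1 - 1 / (Real.exp 1 * d) := by
  have hrhs : 1 / Real.exp 1 - 1 / (Real.exp 1 * d) = Real.exp (-1) * (1 - (d : ℝ)⁻¹) := by
    rw [Real.exp_neg, mul_one_sub, one_div, one_div, mul_inv]
  rw [ge_iff_le, hrhs, one_div]
  exact Real.exp_neg_one_mul_le_one_sub_inv_pow d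

/-- For every positive integer `d`, `(1 - 1/d)^d ≥ 1/e - 1/(e·d)`. -/
theorem stmt_3 (d : ℕ) (hd : 0 < d) :
    (1 - 1 / (d : ℝ)) ^ d ≥ 1 / Real.exp 1 - 1 / (Real.exp 1 * d) :=
  stmt_3_general d
end

section
/- For the complete bipartite graph between n_U users and n_I items, with a single item of value 1 chosen uniformly at random (all other items having value 0), the expected total reward (summed over all users, arriving in any order, each shown one item by the optimal deterministic algorithm) equals min{n_U, n_I}·(2n_U + 1 − min{n_U, n_I})/(2n_I). -/
/-!
Until the good item `i*` is shown, every user's feedback is "bad", so the algorithm runs along a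
fixed history that does not depend on `i*`. Hence at time `t` the good item can be shown only if
it is one of the at most `min nI (t + 1)` items this blind run has shown by then, and summing over
`i*` the reward of user `t` is at most `min nI (t + 1)`. Exploring the items one by one and
exploiting the good item once found attains this bound at every `t`, and
`∑ t < nU, min nI (t + 1) = m (2 nU + 1 - m) / 2` with `m = min nU nI`.
-/

/-- The history of (shown item, was-it-the-good-item) pairs produced by a
deterministic algorithm `alg` on the complete bipartite graph, when the unique
value-1 item is `istar`, after `t` users have been served. -/
def hist (nI : ℕ) (alg : List (Fin nI × Bool) → Fin nI) (istar : Fin nI) :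
    ℕ → List (Fin nI × Bool)
  | 0 => []
  | t + 1 =>
      hist nI alg istar t ++
        [(alg (hist nI alg istar t), decide (alg (hist nI alg istar t) = istar))]

/-- Total reward over `nU` users: each user gets reward 1 iff she is shown the
good item `istar`. -/
def totalReward (nU nI : ℕ) (alg : List (Fin nI × Bool) → Fin nI)
    (istar : Fin nI) : ℕ :=
  ∑ t ∈ Finset.range nU, if alg (hist nI alg istar t) = istar then 1 else 0

open Finset

def blindHist (nI : ℕ) (alg : List (Fin nI × Bool) → Fin nI) : ℕ → List (Fin nI × Bool)
  | 0 => []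
  | t + 1 => blindHist nI alg t ++ [(alg (blindHist nI alg t), false)]

lemma hist_eq_blindHist (nI : ℕ) (alg : List (Fin nI × Bool) → Fin nI) (istar : Fin nI)
    (t : ℕ) (h : ∀ s < t, alg (blindHist nI alg s) ≠ istar) :
    hist nI alg istar t = blindHist nI alg t := by
  induction t with
  | zero => rfl
  | succ t ih =>
    rw [hist, blindHist, ih fun s hs => h s (Nat.lt_succ_of_lt hs),
      decide_eq_false (h t t.lt_succ_self)]

lemma exists_blindHist_of_shows_good (nI : ℕ) (alg : List (Fin nI × Bool) → Fin nI)
    (istar : Fin nI) (t : ℕ) (h : alg (hist nI alg istar t) = istar) :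
    ∃ s ≤ t, alg (blindHist nI alg s) = istar := by
  by_contra! hmiss
  rw [hist_eq_blindHist nI alg istar t fun s hs => hmiss s hs.le] at h
  exact hmiss t le_rfl h

lemma card_shows_good_le (nI : ℕ) (alg : List (Fin nI × Bool) → Fin nI) (t : ℕ) :
    #{istar | alg (hist nI alg istar t) = istar} ≤ min nI (t + 1) := by
  have hsub : ({istar | alg (hist nI alg istar t) = istar} : Finset (Fin nI)) ⊆
      (range (t + 1)).image fun s => alg (blindHist nI alg s) := by
    intro istar hi
    obtain ⟨s, hs, hshow⟩ :=
      exists_blindHist_of_shows_good nI alg istar t (mem_filter.mp hi).2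
    exact mem_image.mpr ⟨s, mem_range.mpr (Nat.lt_succ_of_le hs), hshow⟩
  refine le_min ?_ ?_
  · exact card_le_univ _ |>.trans_eq (Fintype.card_fin nI)
  · simpa using (card_le_card hsub).trans card_image_le

lemma sum_totalReward_eq_sum_card (nU nI : ℕ) (alg : List (Fin nI × Bool) → Fin nI) :
    ∑ istar, totalReward nU nI alg istar =
      ∑ t ∈ range nU, #{istar | alg (hist nI alg istar t) = istar} := by
  simp only [totalReward, card_filter]
  exact sum_comm

lemma sum_totalReward_le (nU nI : ℕ) (alg : List (Fin nI × Bool) → Fin nI) :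
    ∑ istar, totalReward nU nI alg istar ≤ ∑ t ∈ range nU, min nI (t + 1) := by
  rw [sum_totalReward_eq_sum_card]
  exact sum_le_sum fun t _ => card_shows_good_le nI alg t

lemma hist_length (nI : ℕ) (alg : List (Fin nI × Bool) → Fin nI) (istar : Fin nI) (t : ℕ) :
    (hist nI alg istar t).length = t := by
  induction t with
  | zero => rfl
  | succ t ih => simp [hist, ih]

def exploreExploit (nI : ℕ) (hI : 0 < nI) (h : List (Fin nI × Bool)) : Fin nI :=
  match h.getLast? with
  | some (i, true) => i
  | _ => ⟨h.length % nI, Nat.mod_lt _ hI⟩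

lemma exploreExploit_append_singleton (nI : ℕ) (hI : 0 < nI) (h : List (Fin nI × Bool))
    (i : Fin nI) (good : Bool) :
    exploreExploit nI hI (h ++ [(i, good)]) =
      if good then i else ⟨(h.length + 1) % nI, Nat.mod_lt _ hI⟩ := by
  cases good <;> simp [exploreExploit]

lemma exploreExploit_hist (nI : ℕ) (hI : 0 < nI) (istar : Fin nI) (t : ℕ) :
    exploreExploit nI hI (hist nI (exploreExploit nI hI) istar t) =
      if (istar : ℕ) ≤ t then istar else ⟨t % nI, Nat.mod_lt _ hI⟩ := by
  induction t with
  | zero =>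
    split_ifs with h
    · ext; simp [exploreExploit, hist, show (istar : ℕ) = 0 by omega]
    · rfl
  | succ t ih =>
    rw [hist, exploreExploit_append_singleton, ih, hist_length]
    by_cases h : (istar : ℕ) ≤ t
    · simp [h, show (istar : ℕ) ≤ t + 1 by omega]
    · have ht : t < nI := by omega
      have hne : (⟨t % nI, Nat.mod_lt _ hI⟩ : Fin nI) ≠ istar := by
        simp only [Ne, Fin.ext_iff, Nat.mod_eq_of_lt ht]; omega
      simp only [h, if_false, hne, decide_false, Bool.false_eq_true]
      split_ifs with h'
      · ext; simp only [Nat.mod_eq_of_lt (show t + 1 < nI by omega)]; omega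
      · rfl

lemma sum_totalReward_exploreExploit (nU nI : ℕ) (hI : 0 < nI) :
    ∑ istar, totalReward nU nI (exploreExploit nI hI) istar =
      ∑ t ∈ range nU, min nI (t + 1) := by
  rw [sum_totalReward_eq_sum_card]
  refine sum_congr rfl fun t _ => ?_
  rw [← Fin.card_filter_val_lt]
  congr 1
  ext istar
  simp only [mem_filter, mem_univ, true_and, exploreExploit_hist]
  split_ifs with h
  · simp only [true_iff]; omega
  · simp only [Fin.ext_iff, Nat.mod_eq_of_lt (show t < nI by omega)]; omega

lemma cast_sum_range_min_succ (nU nI : ℕ) :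
    ((∑ t ∈ range nU, min nI (t + 1) : ℕ) : ℝ) =
      ((min nU nI : ℕ) : ℝ) * (2 * nU + 1 - ((min nU nI : ℕ) : ℝ)) / 2 := by
  induction nU with
  | zero => simp
  | succ n ih =>
    rw [sum_range_succ, Nat.cast_add, ih]
    rcases le_or_gt nI n with h | h
    · rw [min_eq_right h, min_eq_left (by omega), min_eq_right (by omega)]
      push_cast; ring
    · rw [min_eq_left h.le, min_eq_right (by omega), min_eq_left (by omega)]
      push_cast; ring

theorem stmt_7_general (nU nI : ℕ) (hI : 0 < nI) :
    IsGreatest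
      {x : ℝ | ∃ alg : List (Fin nI × Bool) → Fin nI,
        x = (∑ istar : Fin nI, (totalReward nU nI alg istar : ℝ)) / nI}
      (((min nU nI : ℕ) : ℝ) * (2 * nU + 1 - ((min nU nI : ℕ) : ℝ)) /
        (2 * nI)) := by
  have hvalue : ((min nU nI : ℕ) : ℝ) * (2 * nU + 1 - ((min nU nI : ℕ) : ℝ)) / (2 * nI) =
      ((∑ t ∈ range nU, min nI (t + 1) : ℕ) : ℝ) / nI := by
    rw [cast_sum_range_min_succ, div_div, mul_comm (2 : ℝ)]
  rw [hvalue]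
  refine ⟨⟨exploreExploit nI hI, ?_⟩, ?_⟩
  · rw [← Nat.cast_sum, sum_totalReward_exploreExploit]
  · rintro x ⟨alg, rfl⟩
    rw [← Nat.cast_sum]
    gcongr
    exact sum_totalReward_le nU nI alg

/-- On the complete bipartite graph with `nU` users and `nI` items, with a
single value-1 item chosen uniformly at random (others value 0), the optimal
deterministic algorithm's expected total reward equals
`min{nU,nI}·(2nU + 1 − min{nU,nI})/(2nI)`: this value is achieved by some
deterministic algorithm and no deterministic algorithm exceeds it. -/
theorem stmt_7 (nU nI : ℕ) (hU : 0 < nU) (hI : 0 < nI) :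
    IsGreatest
      {x : ℝ | ∃ alg : List (Fin nI × Bool) → Fin nI,
        x = (∑ istar : Fin nI, (totalReward nU nI alg istar : ℝ)) / nI}
      (((min nU nI : ℕ) : ℝ) * (2 * nU + 1 - ((min nU nI : ℕ) : ℝ)) /
        (2 * nI)) :=
  stmt_7_general nU nI hI
end

section
/- The recursion R(n_U, n_I) = n_U/n_I + ((n_I−1)/n_I)·R(n_U−1, n_I−1), for n_U, n_I ≥ 2, with R(n_U, 1) = n_U and R(1, n_I) = 1/n_I, has the unique solution R(n_U, n_I) = m(2n_U + 1 − m)/(2n_I) where m = min{n_U, n_I}. -/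
/-!
The recursion moves diagonally from `(nU, nI)` to `(nU - 1, nI - 1)` until it hits one of the two
boundary lines `nU = 1` or `nI = 1`, so it determines `R` uniquely on positive pairs.  It therefore
suffices to check that `m(2nU + 1 - m)/(2nI)` satisfies the boundary conditions and the recursion;
for the latter, `min` commutes with the diagonal step: `min (nU - 1) (nI - 1) = min nU nI - 1`.
-/

theorem eq_of_diagonal_recursion {R S : ℕ → ℕ → ℝ} (a b : ℕ → ℕ → ℝ)
    (hR : ∀ nU nI, 2 ≤ nU → 2 ≤ nI → R nU nI = a nU nI + b nU nI * R (nU - 1) (nI - 1))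
    (hS : ∀ nU nI, 2 ≤ nU → 2 ≤ nI → S nU nI = a nU nI + b nU nI * S (nU - 1) (nI - 1))
    (hleft : ∀ nI, 1 ≤ nI → R 1 nI = S 1 nI) (hright : ∀ nU, 1 ≤ nU → R nU 1 = S nU 1) :
    ∀ nU nI, 1 ≤ nU → 1 ≤ nI → R nU nI = S nU nI := by
  intro nU nI hU hI
  induction nI generalizing nU with
  | zero => omega
  | succ n ih =>
    rcases Nat.lt_or_ge n 1 with hn | hn
    · obtain rfl : n = 0 := by omega
      exact hright nU hU
    rcases Nat.lt_or_ge nU 2 with hU1 | hU2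
    · obtain rfl : nU = 1 := by omega
      exact hleft _ hI
    rw [hR nU _ hU2 (by omega), hS nU _ hU2 (by omega), Nat.add_sub_cancel,
      ih (nU - 1) (by omega) hn]

noncomputable def closedForm (nU nI : ℕ) : ℝ :=
  ((min nU nI : ℕ) : ℝ) * (2 * (nU : ℝ) + 1 - ((min nU nI : ℕ) : ℝ)) / (2 * (nI : ℝ))

theorem closedForm_one_left {nI : ℕ} (hI : 1 ≤ nI) : closedForm 1 nI = 1 / (nI : ℝ) := by
  have hnI : (nI : ℝ) ≠ 0 := by positivity
  rw [closedForm, Nat.min_eq_left hI]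
  field_simp
  norm_num

theorem closedForm_one_right {nU : ℕ} (hU : 1 ≤ nU) : closedForm nU 1 = (nU : ℝ) := by
  rw [closedForm, Nat.min_eq_right hU]
  push_cast
  ring

theorem closedForm_rec {nU nI : ℕ} (hU : 2 ≤ nU) (hI : 2 ≤ nI) :
    closedForm nU nI =
      (nU : ℝ) / nI + (((nI : ℝ) - 1) / nI) * closedForm (nU - 1) (nI - 1) := by
  have hmin : min (nU - 1) (nI - 1) = min nU nI - 1 := by omega
  have hm : 1 ≤ min nU nI := by omega
  have hnI : (nI : ℝ) - 1 ≠ 0 := by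
    rw [sub_ne_zero]; exact_mod_cast (show nI ≠ 1 by omega)
  have hnI' : (nI : ℝ) ≠ 0 := by positivity
  rw [closedForm, closedForm, hmin, Nat.cast_sub hm, Nat.cast_sub (by omega : 1 ≤ nU),
    Nat.cast_sub (by omega : 1 ≤ nI), Nat.cast_one]
  field_simp
  ring

/-- The recursion `R(nU,nI) = nU/nI + ((nI−1)/nI)·R(nU−1,nI−1)` for
`nU, nI ≥ 2`, with boundary conditions `R(nU,1) = nU` and `R(1,nI) = 1/nI`,
is solved (uniquely) by `R(nU,nI) = m(2nU+1−m)/(2nI)` where `m = min{nU,nI}`. -/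
theorem stmt_8 (R : ℕ → ℕ → ℝ)
    (hbase1 : ∀ nI, 1 ≤ nI → R 1 nI = 1 / (nI : ℝ))
    (hbase2 : ∀ nU, 1 ≤ nU → R nU 1 = (nU : ℝ))
    (hrec : ∀ nU nI, 2 ≤ nU → 2 ≤ nI →
      R nU nI = (nU : ℝ) / nI + (((nI : ℝ) - 1) / nI) * R (nU - 1) (nI - 1)) :
    ∀ nU nI, 1 ≤ nU → 1 ≤ nI →
      R nU nI = ((min nU nI : ℕ) : ℝ) *
        (2 * (nU : ℝ) + 1 - ((min nU nI : ℕ) : ℝ)) / (2 * (nI : ℝ)) :=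
  eq_of_diagonal_recursion (S := closedForm) _ _ hrec (fun _ _ hU hI => closedForm_rec hU hI)
    (fun _ hI => (hbase1 _ hI).trans (closedForm_one_left hI).symm)
    (fun _ hU => (hbase2 _ hU).trans (closedForm_one_right hU).symm)
end
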